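/- For a 2-layer internally triangulated layered graph, there is always a layer whose first (leftmost) vertex is a fan, while the first vertex of the opposite layer is a T-vertex. -/

import Mathlib

/-! The first vertices `a₀`, `b₀` of the two rows are adjacent. They cannot both be fans: a second
neighbour `b > b₀` of `a₀` and a second neighbour `a > a₀` of `b₀` would give crossing edges.
They cannot both be T-vertices either: the first triangle of the strip has a third vertex, a
common neighbour of two consecutive vertices of one row; if `a₀` and its successor share the
neighbour `b`, then `b = b₀` when `a₀` is a T-vertex, so `b₀` is a fan. -/

section FirstVertices

variable {α β : Type*} (R : α → β → Prop) {a₀ : α} {b₀ : β}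

theorem not_nontrivial_and_nontrivial_of_noncrossing [PartialOrder α] [PartialOrder β]
    (ha₀ : ∀ a, a₀ ≤ a) (hb₀ : ∀ b, b₀ ≤ b) (hR₀ : R a₀ b₀)
    (hnocross : ∀ a a' b b', a < a' → b' < b → ¬ (R a b ∧ R a' b')) :
    ¬ (Nontrivial {b // R a₀ b} ∧ Nontrivial {a // R a b₀}) := by
  rintro ⟨_, _⟩
  obtain ⟨⟨b, hb⟩, hb_ne⟩ := exists_ne (⟨b₀, hR₀⟩ : {b // R a₀ b})
  obtain ⟨⟨a, ha⟩, ha_ne⟩ := exists_ne (⟨a₀, hR₀⟩ : {a // R a b₀})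
  refine hnocross a₀ a b b₀ ((ha₀ a).lt_of_ne ?_) ((hb₀ b).lt_of_ne ?_) ⟨hb, ha⟩
  · exact fun h => ha_ne (Subtype.ext h.symm)
  · exact fun h => hb_ne (Subtype.ext h.symm)

theorem not_subsingleton_and_subsingleton_of_common_neighbor (hR₀ : R a₀ b₀) {a₁ : α} {b : β}
    (ha₁ : a₁ ≠ a₀) (h₀ : R a₀ b) (h₁ : R a₁ b) :
    ¬ (Subsingleton {b // R a₀ b} ∧ Subsingleton {a // R a b₀}) := by
  rintro ⟨_, _⟩
  have hb₀ : b = b₀ :=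
    congrArg Subtype.val (Subsingleton.elim (⟨b, h₀⟩ : {b // R a₀ b}) ⟨b₀, hR₀⟩)
  subst hb₀
  exact ha₁ (congrArg Subtype.val (Subsingleton.elim (⟨a₁, h₁⟩ : {a // R a b}) ⟨a₀, hR₀⟩))

end FirstVertices

theorem card_eq_one_and_two_le_card_or {S T : Type*} [Finite S] [Finite T] [Nonempty S]
    [Nonempty T] (hNt : ¬ (Nontrivial S ∧ Nontrivial T))
    (hSs : ¬ (Subsingleton S ∧ Subsingleton T)) :
    (2 ≤ Nat.card S ∧ Nat.card T = 1) ∨ (Nat.card S = 1 ∧ 2 ≤ Nat.card T) := by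
  rcases subsingleton_or_nontrivial S with hS | hS <;>
    rcases subsingleton_or_nontrivial T with hT | hT
  · exact absurd ⟨hS, hT⟩ hSs
  · exact .inr ⟨Nat.card_eq_one_iff_unique.mpr ⟨hS, ‹_›⟩, Finite.one_lt_card⟩
  · exact .inl ⟨Finite.one_lt_card, Nat.card_eq_one_iff_unique.mpr ⟨hT, ‹_›⟩⟩
  · exact absurd ⟨hS, hT⟩ hNt

theorem stmt8_general (n m : ℕ) (hn : 0 < n) (hm : 0 < m) (hsize : 3 ≤ n + m)
    (A : Fin n → Fin m → Prop)
    (hA00 : A ⟨0, hn⟩ ⟨0, hm⟩)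
    (hnocross : ∀ (j j' : Fin n) (i i' : Fin m), j < j' → i' < i → ¬ (A j i ∧ A j' i'))
    (htri₀ : ∀ (j : Fin n) (h : (j : ℕ) + 1 < n), ∃ i, A j i ∧ A ⟨(j : ℕ) + 1, h⟩ i)
    (htri₁ : ∀ (i : Fin m) (h : (i : ℕ) + 1 < m), ∃ j, A j i ∧ A j ⟨(i : ℕ) + 1, h⟩) :
    (2 ≤ Nat.card {i : Fin m // A ⟨0, hn⟩ i} ∧ Nat.card {j : Fin n // A j ⟨0, hm⟩} = 1) ∨
    (Nat.card {i : Fin m // A ⟨0, hn⟩ i} = 1 ∧ 2 ≤ Nat.card {j : Fin n // A j ⟨0, hm⟩}) := by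
  have : Nonempty {i : Fin m // A ⟨0, hn⟩ i} := ⟨⟨_, hA00⟩⟩
  have : Nonempty {j : Fin n // A j ⟨0, hm⟩} := ⟨⟨_, hA00⟩⟩
  refine card_eq_one_and_two_le_card_or ?_ ?_
  · exact not_nontrivial_and_nontrivial_of_noncrossing A (fun j => Nat.zero_le j.val)
      (fun i => Nat.zero_le i.val) hA00 hnocross
  rcases Nat.lt_or_ge 1 n with hn₁ | hm₁
  · obtain ⟨i, hi₀, hi₁⟩ := htri₀ ⟨0, hn⟩ hn₁
    exact not_subsingleton_and_subsingleton_of_common_neighbor A hA00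
      (Fin.ne_of_val_ne one_ne_zero) hi₀ hi₁
  · obtain ⟨j, hj₀, hj₁⟩ := htri₁ ⟨0, hm⟩ (show 0 + 1 < m by omega)
    exact fun h => not_subsingleton_and_subsingleton_of_common_neighbor (flip A) hA00
      (Fin.ne_of_val_ne one_ne_zero) hj₀ hj₁ h.symm

/-- For a 2-layer internally triangulated layered graph (with at least three
vertices in total), there is always a layer whose first (leftmost) vertex is a fan
(at least two neighbors in the opposite row), while the first vertex of the opposite layer
is a T-vertex (exactly one neighbor in the opposite row).

The cross edges are modeled by a relation `A : Fin n → Fin m → Prop` between the two rows,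
satisfying: every vertex has a neighbor in the opposite row, neighborhoods are intervals,
edges do not cross (planarity), the two leftmost vertices are adjacent, and consecutive
vertices of a row share a common neighbor (internal triangulation). -/
theorem stmt8 (n m : ℕ) (hn : 0 < n) (hm : 0 < m) (hsize : 3 ≤ n + m)
    (A : Fin n → Fin m → Prop)
    (hA00 : A ⟨0, hn⟩ ⟨0, hm⟩)
    (hnonempty₀ : ∀ j, ∃ i, A j i)
    (hnonempty₁ : ∀ i, ∃ j, A j i)
    (hinterval₀ : ∀ j (i₁ i₂ i : Fin m), A j i₁ → A j i₂ → i₁ ≤ i → i ≤ i₂ → A j i)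
    (hinterval₁ : ∀ i (j₁ j₂ j : Fin n), A j₁ i → A j₂ i → j₁ ≤ j → j ≤ j₂ → A j i)
    (hnocross : ∀ (j j' : Fin n) (i i' : Fin m), j < j' → i' < i → ¬ (A j i ∧ A j' i'))
    (htri₀ : ∀ (j : Fin n) (h : (j : ℕ) + 1 < n), ∃ i, A j i ∧ A ⟨(j : ℕ) + 1, h⟩ i)
    (htri₁ : ∀ (i : Fin m) (h : (i : ℕ) + 1 < m), ∃ j, A j i ∧ A j ⟨(i : ℕ) + 1, h⟩) :
    (2 ≤ Nat.card {i : Fin m // A ⟨0, hn⟩ i} ∧ Nat.card {j : Fin n // A j ⟨0, hm⟩} = 1) ∨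
    (Nat.card {i : Fin m // A ⟨0, hn⟩ i} = 1 ∧ 2 ≤ Nat.card {j : Fin n // A j ⟨0, hm⟩}) :=
  stmt8_general n m hn hm hsize A hA00 hnocross htri₀ htri₁
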